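/- arXiv:1009.5335 — 2 statements merged into one kernel-verified Lean document; each statement's English description precedes it below -/
import Mathlib

section
/- Let f : [0,1] → ℝ be in L², N > 1 a natural number, and let a_1,…,a_N > 0 with ∑ a_k = 1, with α_0 = 0 and α_k = α_{k-1} + a_k. Define G(f) = ∑_{k=1}^N (β_k·χ_{(α_{k-1},α_k)} + d_k·G_k(f)) where [G_k(f)](x) = f((x-α_{k-1})/a_k) for x ∈ (α_{k-1},α_k) and 0 otherwise. Then G is a contraction mapping on L²[0,1] if and only if ∑_{k=1}^N a_k·|d_k|² < 1. -/
open MeasureTheory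

/-!
The constants `β_k` cancel in `G f - G g = ∑ d_k G_k (f - g)`. The intervals `(α_{k-1}, α_k)`
are disjoint subintervals of `[0,1]`, and on the `k`-th one `G_k h` is `h` composed with the
affine bijection onto `(0,1)`, which scales Lebesgue measure by `a_k`. Hence
`‖∑ d_k G_k h‖₂² = (∑ a_k d_k²) ‖h‖₂²` exactly: `G` stretches every distance by the factor
`√(∑ a_k d_k²)`, and testing with `f - g = 1` shows no smaller constant works.
-/

/-- The endpoints `α_k = a_1 + ⋯ + a_k` (indices shifted to start at 0). -/
noncomputable def alphaPt (a : ℕ → ℝ) (k : ℕ) : ℝ := ∑ j ∈ Finset.range k, a j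

/-- The similarity operator `G` associated with the data `a, β, d`:
`G(f) = ∑_{k=1}^N (β_k · χ_{(α_{k-1},α_k)} + d_k · G_k(f))`, realized pointwise. -/
noncomputable def similarityOp (N : ℕ) (a β d : ℕ → ℝ) (f : ℝ → ℝ) (x : ℝ) : ℝ :=
  ∑ k ∈ Finset.range N,
    Set.indicator (Set.Ioo (alphaPt a k) (alphaPt a (k + 1)))
      (fun t => β k + d k * f ((t - alphaPt a k) / a k)) x

open Set
open scoped ENNReal

theorem Finset.comp_sum_indicator_of_pairwiseDisjoint {ι α M P : Type*} [AddCommMonoid M]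
    [AddCommMonoid P] {s : Finset ι} {t : ι → Set α} (hst : (s : Set ι).PairwiseDisjoint t)
    (f : ι → α → M) {g : M → P} (hg : g 0 = 0) (x : α) :
    g (∑ i ∈ s, (t i).indicator (f i) x) = ∑ i ∈ s, (t i).indicator (g ∘ f i) x := by
  by_cases hx : ∃ j ∈ s, x ∈ t j
  · obtain ⟨j, hjs, hxj⟩ := hx
    have hxi : ∀ i ∈ s, i ≠ j → x ∉ t i := fun i his hij hxi =>
      Set.disjoint_left.1 (hst his hjs hij) hxi hxj
    rw [sum_eq_single_of_mem j hjs fun i his hij => indicator_of_notMem (hxi i his hij) _,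
      sum_eq_single_of_mem j hjs fun i his hij => indicator_of_notMem (hxi i his hij) _,
      indicator_of_mem hxj, indicator_of_mem hxj, Function.comp_apply]
  · push Not at hx
    rw [sum_eq_zero fun i hi => indicator_of_notMem (hx i hi) _,
      sum_eq_zero fun i hi => indicator_of_notMem (hx i hi) _, hg]

theorem setLIntegral_Ioo_comp_div_sub (G : ℝ → ℝ≥0∞) {c r : ℝ} (hr : 0 < r) :
    ∫⁻ x in Ioo c (c + r), G ((x - c) / r) = ENNReal.ofReal r * ∫⁻ y in Ioo 0 1, G y := by
  have himage : (r * · + c) '' Ioo 0 1 = Ioo c (c + r) := by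
    rw [image_affine_Ioo hr]; congr 1 <;> ring
  rw [← himage, lintegral_image_eq_lintegral_abs_deriv_mul measurableSet_Ioo
    (fun y _ => (((hasDerivAt_id' y).const_mul r).add_const c).hasDerivWithinAt)
    ((strictMono_mul_left_of_pos hr).add_const c).injective.injOn,
    ← lintegral_const_mul' _ _ ENNReal.ofReal_ne_top]
  refine setLIntegral_congr_fun measurableSet_Ioo fun y _ => ?_
  rw [mul_one, abs_of_pos hr, add_sub_cancel_right, mul_div_cancel_left₀ _ hr.ne']

section Partition

variable {N : ℕ} {a : ℕ → ℝ}

theorem alphaPt_succ (a : ℕ → ℝ) (k : ℕ) : alphaPt a (k + 1) = alphaPt a k + a k :=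
  Finset.sum_range_succ a k

theorem alphaPt_le_alphaPt (ha : ∀ k < N, 0 < a k) {i j : ℕ} (hij : i ≤ j) (hjN : j ≤ N) :
    alphaPt a i ≤ alphaPt a j :=
  Finset.sum_le_sum_of_subset_of_nonneg (Finset.range_subset_range.2 hij) fun k hk _ =>
    (ha k <| (Finset.mem_range.1 hk).trans_le hjN).le

theorem pairwiseDisjoint_Ioo_alphaPt (ha : ∀ k < N, 0 < a k) :
    (Finset.range N : Set ℕ).PairwiseDisjoint fun k => Ioo (alphaPt a k) (alphaPt a (k + 1)) := by
  have hdisj : ∀ j k, j < k → k < N →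
      Disjoint (Ioo (alphaPt a j) (alphaPt a (j + 1))) (Ioo (alphaPt a k) (alphaPt a (k + 1))) :=
    fun j k hjk hkN => disjoint_left.2 fun _ hxj hxk =>
      (hxj.2.trans_le (alphaPt_le_alphaPt ha hjk hkN.le)).not_gt hxk.1
  intro j hj k hk hjk
  rcases hjk.lt_or_gt with hjk | hkj
  · exact hdisj j k hjk (Finset.mem_range.1 hk)
  · exact (hdisj k j hkj (Finset.mem_range.1 hj)).symm

theorem Ioo_alphaPt_subset_Icc (ha : ∀ k < N, 0 < a k) (hsum : ∑ k ∈ Finset.range N, a k = 1)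
    {k : ℕ} (hk : k < N) : Ioo (alphaPt a k) (alphaPt a (k + 1)) ⊆ Icc 0 1 := by
  have h0 : 0 ≤ alphaPt a k := alphaPt_le_alphaPt (i := 0) ha k.zero_le hk.le
  have h1 : alphaPt a (k + 1) ≤ 1 := hsum ▸ alphaPt_le_alphaPt ha hk le_rfl
  exact Ioo_subset_Icc_self.trans (Icc_subset_Icc h0 h1)

end Partition

/-- The linear part `h ↦ ∑ d_k G_k(h)` of the affine map `similarityOp`. -/
noncomputable def similarityLinearPart (N : ℕ) (a d : ℕ → ℝ) (h : ℝ → ℝ) (x : ℝ) : ℝ :=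
  ∑ k ∈ Finset.range N,
    (Ioo (alphaPt a k) (alphaPt a (k + 1))).indicator
      (fun t => d k * h ((t - alphaPt a k) / a k)) x

theorem similarityOp_sub_similarityOp (N : ℕ) (a β d : ℕ → ℝ) (f g : ℝ → ℝ) (x : ℝ) :
    similarityOp N a β d f x - similarityOp N a β d g x =
      similarityLinearPart N a d (fun y => f y - g y) x := by
  rw [similarityOp, similarityOp, similarityLinearPart, ← Finset.sum_sub_distrib]
  refine Finset.sum_congr rfl fun k _ => ?_
  rw [← Pi.sub_apply, ← indicator_sub']
  congr 1 with t
  simp only [Pi.sub_apply]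
  ring

section LinearPart

variable {N : ℕ} {a d : ℕ → ℝ}

theorem enorm_similarityLinearPart_rpow (ha : ∀ k < N, 0 < a k) {q : ℝ} (hq : 0 < q)
    (h : ℝ → ℝ) (x : ℝ) :
    ‖similarityLinearPart N a d h x‖ₑ ^ q = ∑ k ∈ Finset.range N,
      (Ioo (alphaPt a k) (alphaPt a (k + 1))).indicator
        (fun t => ‖d k‖ₑ ^ q * ‖h ((t - alphaPt a k) / a k)‖ₑ ^ q) x := by
  rw [similarityLinearPart, Finset.comp_sum_indicator_of_pairwiseDisjoint
    (pairwiseDisjoint_Ioo_alphaPt ha) _ (g := fun y : ℝ => ‖y‖ₑ ^ q) (by simp [hq])]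
  simp only [Function.comp_def, enorm_mul, ENNReal.mul_rpow_of_nonneg _ _ hq.le]

theorem lintegral_enorm_similarityLinearPart_rpow (ha : ∀ k < N, 0 < a k)
    (hsum : ∑ k ∈ Finset.range N, a k = 1) {q : ℝ} (hq : 0 < q) {h : ℝ → ℝ} (hh : Measurable h) :
    ∫⁻ x in Icc 0 1, ‖similarityLinearPart N a d h x‖ₑ ^ q =
      (∑ k ∈ Finset.range N, ENNReal.ofReal (a k) * ‖d k‖ₑ ^ q) * ∫⁻ x in Icc 0 1, ‖h x‖ₑ ^ q := by
  simp_rw [enorm_similarityLinearPart_rpow ha hq]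
  rw [lintegral_finsetSum _ fun k _ => by measurability, Finset.sum_mul]
  refine Finset.sum_congr rfl fun k hk => ?_
  have hk := Finset.mem_range.1 hk
  rw [setLIntegral_indicator measurableSet_Ioo,
    inter_eq_left.2 (Ioo_alphaPt_subset_Icc ha hsum hk), alphaPt_succ,
    setLIntegral_Ioo_comp_div_sub (fun y => ‖d k‖ₑ ^ q * ‖h y‖ₑ ^ q) (ha k hk),
    lintegral_const_mul' _ _ (ENNReal.rpow_ne_top_of_nonneg hq.le enorm_ne_top),
    restrict_Ioo_eq_restrict_Icc, mul_assoc]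

theorem eLpNorm_similarityLinearPart (ha : ∀ k < N, 0 < a k)
    (hsum : ∑ k ∈ Finset.range N, a k = 1) {p : ℝ≥0∞} (hp0 : p ≠ 0) (hp : p ≠ ∞) {h : ℝ → ℝ}
    (hh : Measurable h) :
    eLpNorm (similarityLinearPart N a d h) p (volume.restrict (Icc 0 1)) =
      (∑ k ∈ Finset.range N, ENNReal.ofReal (a k) * ‖d k‖ₑ ^ p.toReal) ^ (1 / p.toReal) *
        eLpNorm h p (volume.restrict (Icc 0 1)) := by
  rw [eLpNorm_eq_lintegral_rpow_enorm_toReal hp0 hp,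
    eLpNorm_eq_lintegral_rpow_enorm_toReal hp0 hp,
    lintegral_enorm_similarityLinearPart_rpow ha hsum (ENNReal.toReal_pos hp0 hp) hh,
    ENNReal.mul_rpow_of_nonneg _ _ (by positivity)]

end LinearPart

theorem sum_ofReal_mul_enorm_rpow_two {N : ℕ} {a : ℕ → ℝ} (ha : ∀ k < N, 0 < a k) (d : ℕ → ℝ) :
    ∑ k ∈ Finset.range N, ENNReal.ofReal (a k) * ‖d k‖ₑ ^ (2 : ℝ) =
      ENNReal.ofReal (∑ k ∈ Finset.range N, a k * d k ^ 2) := by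
  rw [ENNReal.ofReal_sum_of_nonneg fun k hk =>
    mul_nonneg (ha k (Finset.mem_range.1 hk)).le (sq_nonneg _)]
  refine Finset.sum_congr rfl fun k hk => ?_
  rw [ENNReal.ofReal_mul (ha k (Finset.mem_range.1 hk)).le, ENNReal.rpow_two,
    ← ofReal_norm, ← ENNReal.ofReal_pow (norm_nonneg _), Real.norm_eq_abs, sq_abs]

theorem eLpNorm_two_similarityOp_sub {N : ℕ} {a : ℕ → ℝ} (ha : ∀ k < N, 0 < a k)
    (hsum : ∑ k ∈ Finset.range N, a k = 1) (β d : ℕ → ℝ) {f g : ℝ → ℝ} (hf : Measurable f)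
    (hg : Measurable g) :
    eLpNorm (fun x => similarityOp N a β d f x - similarityOp N a β d g x) 2
        (volume.restrict (Icc 0 1)) =
      ENNReal.ofReal √(∑ k ∈ Finset.range N, a k * d k ^ 2) *
        eLpNorm (fun x => f x - g x) 2 (volume.restrict (Icc 0 1)) := by
  have hS : 0 ≤ ∑ k ∈ Finset.range N, a k * d k ^ 2 :=
    Finset.sum_nonneg fun k hk => mul_nonneg (ha k (Finset.mem_range.1 hk)).le (sq_nonneg _)
  rw [funext (similarityOp_sub_similarityOp N a β d f g),
    eLpNorm_similarityLinearPart (h := fun y => f y - g y) ha hsum two_ne_zero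
      ENNReal.ofNat_ne_top (hf.sub hg),
    ENNReal.toReal_ofNat, sum_ofReal_mul_enorm_rpow_two ha,
    ENNReal.ofReal_rpow_of_nonneg hS (by norm_num), Real.sqrt_eq_rpow]

theorem similarityOp_contraction_iff_general (N : ℕ) (a β d : ℕ → ℝ)
    (ha : ∀ k < N, 0 < a k) (hsum : ∑ k ∈ Finset.range N, a k = 1) :
    (∃ c : ℝ, 0 ≤ c ∧ c < 1 ∧ ∀ f g : ℝ → ℝ, Measurable f → Measurable g →
        MemLp f 2 (volume.restrict (Set.Icc (0:ℝ) 1)) →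
        MemLp g 2 (volume.restrict (Set.Icc (0:ℝ) 1)) →
        eLpNorm (fun x => similarityOp N a β d f x - similarityOp N a β d g x) 2
            (volume.restrict (Set.Icc (0:ℝ) 1)) ≤
          ENNReal.ofReal c *
            eLpNorm (fun x => f x - g x) 2 (volume.restrict (Set.Icc (0:ℝ) 1))) ↔
      ∑ k ∈ Finset.range N, a k * (d k) ^ 2 < 1 := by
  set S := ∑ k ∈ Finset.range N, a k * d k ^ 2
  have hsqrt : √S < 1 ↔ S < 1 := by rw [Real.sqrt_lt' one_pos, one_pow]
  constructor
  · rintro ⟨c, hc0, hc1, hcontr⟩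
    have hone : eLpNorm (fun _ : ℝ => (1 : ℝ)) 2 (volume.restrict (Icc (0 : ℝ) 1)) = 1 := by
      simp [eLpNorm_const]
    have h10 := hcontr (fun _ => 1) (fun _ => 0) measurable_const measurable_const
      (memLp_const 1) (memLp_const 0)
    rw [eLpNorm_two_similarityOp_sub ha hsum β d measurable_const measurable_const] at h10
    simp only [sub_zero, hone, mul_one] at h10
    exact hsqrt.1 (((ENNReal.ofReal_le_ofReal_iff hc0).1 h10).trans_lt hc1)
  · intro hS
    refine ⟨√S, Real.sqrt_nonneg S, hsqrt.2 hS, fun f g hf hg _ _ => ?_⟩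
    exact (eLpNorm_two_similarityOp_sub ha hsum β d hf hg).le

/-- the similarity operator `G` is a contraction on `L²[0,1]`
if and only if `∑ a_k d_k² < 1`. -/
theorem similarityOp_contraction_iff (N : ℕ) (hN : 1 < N) (a β d : ℕ → ℝ)
    (ha : ∀ k < N, 0 < a k) (hsum : ∑ k ∈ Finset.range N, a k = 1) :
    (∃ c : ℝ, 0 ≤ c ∧ c < 1 ∧ ∀ f g : ℝ → ℝ, Measurable f → Measurable g →
        MemLp f 2 (volume.restrict (Set.Icc (0:ℝ) 1)) →
        MemLp g 2 (volume.restrict (Set.Icc (0:ℝ) 1)) →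
        eLpNorm (fun x => similarityOp N a β d f x - similarityOp N a β d g x) 2
            (volume.restrict (Set.Icc (0:ℝ) 1)) ≤
          ENNReal.ofReal c *
            eLpNorm (fun x => f x - g x) 2 (volume.restrict (Set.Icc (0:ℝ) 1))) ↔
      ∑ k ∈ Finset.range N, a k * (d k) ^ 2 < 1 :=
  similarityOp_contraction_iff_general N a β d ha hsum
end

section
/- Let 𝔈 be a finite-dimensional inner product space, D : 𝔈 → 𝔈 a nonnegative self-adjoint operator, and F : 𝔈 → 𝔈 a self-adjoint operator. Let r = rank F, and let {μ_k}_{k=1}^r and {λ_k}_{k=1}^r be the eigenvalues (counted with multiplicity) of the pencils 1 - λF and (1+D) - λF respectively, i.e., the values λ for which 1 - λF (resp. 1 + D - λF) is singular, counted appropriately. Then ∏_{k=1}^r (λ_k/μ_k) ≤ det(1 + D). -/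
/-!
In an orthonormal eigenbasis of `F`, with eigenvalues `νᵢ`, the pencil polynomials are
`p(x) = det (1 - xF) = ∏ (1 - x νᵢ)` and `q(x) = det (1 + D - xF) = det (diag (1 - x νᵢ) + D')`,
where `D'` is `D` in that basis. Since `p(0) = 1` and `q(0) = det (1 + D)`, Vieta gives
`∏ λₖ / μₖ = det (1 + D) · lc p / lc q` as soon as both polynomials have all their `r` roots.
For large `x`, `q(x) / p(x) = det (1 + diag (1 - x νᵢ)⁻¹ D')` tends to `det (1 + E D')`, where `E`
projects onto `ker F`; by Sylvester's identity this is `det (1 + E D' E) ≥ 1`. A nonzero limit of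
`q / p` forces `deg q = deg p = r`, so `q` splits as well, and `lc q / lc p = det (1 + E D') ≥ 1`.
-/

open Polynomial Filter Topology

namespace Polynomial

theorem natDegree_eq_and_leadingCoeff_div_eq_of_tendsto {𝕜 : Type*} [NormedField 𝕜]
    [LinearOrder 𝕜] [IsStrictOrderedRing 𝕜] [OrderTopology 𝕜] {P Q : 𝕜[X]} {c : 𝕜}
    (hc : c ≠ 0) (h : Tendsto (fun x => eval x P / eval x Q) atTop (𝓝 c)) :
    P.natDegree = Q.natDegree ∧ P.leadingCoeff / Q.leadingCoeff = c := by
  have hPQ : P.leadingCoeff / Q.leadingCoeff ≠ 0 := by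
    intro h0
    have hzero : (fun x => eval x P / eval x Q) = fun _ => 0 := by
      rcases div_eq_zero_iff.1 h0 with hP | hQ
      · simp [leadingCoeff_eq_zero.1 hP]
      · simp [leadingCoeff_eq_zero.1 hQ]
    exact hc (tendsto_nhds_unique (hzero ▸ h) tendsto_const_nhds)
  rcases (tendsto_const_mul_zpow_atTop_nhds_iff hPQ).1
    ((isEquivalent_atTop_div P Q).tendsto_nhds h) with ⟨hdeg, hlc⟩ | ⟨-, hc0⟩
  · exact ⟨by omega, hlc⟩
  · exact absurd hc0 hc

variable {K ι : Type*} [Field K] [Fintype ι]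

theorem coeff_zero_eq_of_roots_eq {p : K[X]} {μ : ι → K} (hp : p.Splits)
    (hμ : p.roots = Finset.univ.val.map μ) :
    p.coeff 0 = (-1) ^ Fintype.card ι * p.leadingCoeff * ∏ i, μ i := by
  rw [hp.coeff_zero_eq_leadingCoeff_mul_prod_roots, hp.natDegree_eq_card_roots, hμ]
  simp

theorem prod_div_eq_of_roots_eq {p q : K[X]} {μ lam : ι → K} (hp : p.Splits) (hq : q.Splits)
    (hp0 : p ≠ 0) (hq0 : q ≠ 0)
    (hμ : p.roots = Finset.univ.val.map μ) (hlam : q.roots = Finset.univ.val.map lam) :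
    ∏ i, lam i / μ i = q.coeff 0 / p.coeff 0 * (p.leadingCoeff / q.leadingCoeff) := by
  rw [coeff_zero_eq_of_roots_eq hp hμ, coeff_zero_eq_of_roots_eq hq hlam,
    Finset.prod_div_distrib]
  have := leadingCoeff_ne_zero.2 hp0
  have := leadingCoeff_ne_zero.2 hq0
  field_simp

end Polynomial

theorem tendsto_inv_one_sub_mul_atTop (c : ℝ) :
    Tendsto (fun x => (1 - x * c)⁻¹) atTop (𝓝 (if c = 0 then 1 else 0)) := by
  split_ifs with hc
  · simp [hc]
  · have hdeg : (1 - X * C c : ℝ[X]).degree = 1 := by compute_degree!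
    have h := div_tendsto_atTop_zero_of_degree_lt (1 : ℝ[X]) (1 - X * C c)
      (by rw [degree_one, hdeg]; exact zero_lt_one)
    simpa only [eval_one, eval_sub, eval_mul, eval_X, eval_C, one_div] using h

namespace Matrix

variable {n : Type*} [Fintype n] [DecidableEq n]

theorem det_conjStarAlgAut {R : Type*} [CommRing R] [StarRing R]
    (u : unitary (Matrix n n R)) (M : Matrix n n R) :
    det (Unitary.conjStarAlgAut R _ u M) = det M :=
  det_conj_of_mul_eq_one (Unitary.coe_mul_star_self u) (Unitary.coe_star_mul_self u)

omit [Fintype n] in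
theorem one_sub_smul_diagonal {R : Type*} [CommRing R] (x : R) (ν : n → R) :
    (1 : Matrix n n R) - x • diagonal ν = diagonal fun i => 1 - x * ν i := by
  rw [← diagonal_one, ← diagonal_smul, diagonal_sub]
  rfl

theorem det_diagonal_add {K : Type*} [Field K] {a : n → K} (ha : ∀ i, a i ≠ 0)
    (M : Matrix n n K) :
    det (diagonal a + M) = (∏ i, a i) * det (1 + diagonal a⁻¹ * M) := by
  have : diagonal a + M = diagonal a * (1 + diagonal a⁻¹ * M) := by
    rw [Matrix.mul_add, Matrix.mul_one, ← Matrix.mul_assoc, diagonal_mul_diagonal]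
    simp [mul_inv_cancel₀ (ha _)]
  rw [this, det_mul, det_diagonal]

theorem eval_charpolyRev_eq_det {R : Type*} [CommRing R] (M : Matrix n n R) (x : R) :
    eval x M.charpolyRev = det (1 - x • M) := by
  rw [charpolyRev, ← coe_evalRingHom, RingHom.map_det]
  congr 1
  ext i j
  simp [one_apply, apply_ite (eval x), mul_comm x]

theorem eval_det_one_add_map_C_sub_X_smul {R : Type*} [CommRing R] (A B : Matrix n n R)
    (x : R) :
    eval x (det (1 + A.map C - (X : R[X]) • B.map C)) = det (1 + A - x • B) := by
  rw [← coe_evalRingHom, RingHom.map_det]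
  congr 1
  ext i j
  simp [one_apply, apply_ite (eval x), mul_comm x]

namespace IsHermitian

variable {F : Matrix n n ℝ} (hF : F.IsHermitian)
include hF

theorem conjStarAlgAut_star_eigenvectorUnitary_real :
    Unitary.conjStarAlgAut ℝ _ (star hF.eigenvectorUnitary) F = diagonal hF.eigenvalues := by
  simpa using hF.conjStarAlgAut_star_eigenvectorUnitary

theorem det_sub_smul (A : Matrix n n ℝ) (x : ℝ) :
    det (A - x • F) = det (Unitary.conjStarAlgAut ℝ _ (star hF.eigenvectorUnitary) A
      - x • diagonal hF.eigenvalues) := by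
  rw [← det_conjStarAlgAut (star hF.eigenvectorUnitary), map_sub, map_smul,
    hF.conjStarAlgAut_star_eigenvectorUnitary_real]

theorem det_one_sub_smul (x : ℝ) : det (1 - x • F) = ∏ i, (1 - x * hF.eigenvalues i) := by
  rw [hF.det_sub_smul, map_one, one_sub_smul_diagonal, det_diagonal]

theorem splits_charpolyRev : F.charpolyRev.Splits := by
  have : F.charpolyRev = ∏ i, (1 - X * C (hF.eigenvalues i)) := Polynomial.funext fun x => by
    simp [eval_charpolyRev_eq_det, hF.det_one_sub_smul, eval_prod, mul_comm x]
  exact this ▸ Splits.prod fun _ _ => Splits.of_degree_le_one (by compute_degree)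

end IsHermitian

theorem PosSemidef.one_le_det_one_add {M : Matrix n n ℝ} (hM : M.PosSemidef) :
    1 ≤ det (1 + M) := by
  rw [← det_conjStarAlgAut (star hM.1.eigenvectorUnitary), map_add, map_one,
    hM.1.conjStarAlgAut_star_eigenvectorUnitary_real, ← diagonal_one, diagonal_add,
    det_diagonal]
  exact Finset.one_le_prod fun i _ => le_add_of_nonneg_right (hM.eigenvalues_nonneg i)

theorem PosSemidef.one_le_det_one_add_mul {M E : Matrix n n ℝ} (hM : M.PosSemidef)
    (hE : E.IsHermitian) (hEE : E * E = E) : 1 ≤ det (1 + E * M) := by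
  have hEME : (E * M * E).PosSemidef := by
    have := hM.conjTranspose_mul_mul_same E
    rwa [hE.eq] at this
  calc 1 ≤ det (1 + E * M * E) := hEME.one_le_det_one_add
    _ = det (1 + E * (E * M)) := det_one_add_mul_comm _ _
    _ = det (1 + E * M) := by rw [← Matrix.mul_assoc, hEE]

theorem tendsto_det_diagonal_one_sub_mul_add_div (ν : n → ℝ) (M : Matrix n n ℝ) :
    Tendsto (fun x => det (diagonal (fun i => 1 - x * ν i) + M) / ∏ i, (1 - x * ν i)) atTop
      (𝓝 (det (1 + diagonal (fun i => if ν i = 0 then 1 else 0) * M))) := by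
  have hdiag : Tendsto (fun x => diagonal (fun i => 1 - x * ν i)⁻¹) atTop
      (𝓝 (diagonal fun i => if ν i = 0 then 1 else 0)) :=
    (continuous_id.matrix_diagonal).continuousAt.tendsto.comp
      (tendsto_pi_nhds.2 fun i => tendsto_inv_one_sub_mul_atTop (ν i))
  have hne : ∀ᶠ x in atTop, ∀ i, 1 - x * ν i ≠ 0 :=
    eventually_all.2 fun i => (eventually_ne_atTop (ν i)⁻¹).mono fun x hx h =>
      hx (eq_inv_of_mul_eq_one_left (sub_eq_zero.1 h).symm)
  refine Tendsto.congr' ?_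
    ((((by fun_prop : Continuous fun W : Matrix n n ℝ => 1 + W * M).matrix_det).tendsto _).comp
      hdiag)
  filter_upwards [hne] with x hx
  rw [Function.comp_apply, det_diagonal_add hx,
    mul_div_cancel_left₀ _ (Finset.prod_ne_zero_iff.2 fun i _ => hx i)]

theorem PosSemidef.exists_one_le_tendsto_det_one_add_sub_smul_div {D F : Matrix n n ℝ}
    (hD : D.PosSemidef) (hF : F.IsHermitian) :
    ∃ c : ℝ, 1 ≤ c ∧
      Tendsto (fun x : ℝ => det (1 + D - x • F) / det (1 - x • F)) atTop (𝓝 c) := by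
  set Φ := Unitary.conjStarAlgAut ℝ _ (star hF.eigenvectorUnitary)
  -- `E` is the orthogonal projection onto `ker F`, written in the eigenbasis of `F`.
  set E := diagonal fun i => if hF.eigenvalues i = 0 then (1 : ℝ) else 0
  have hE : E * E = E := by
    rw [diagonal_mul_diagonal]
    congr 1
    ext i
    split_ifs <;> simp
  have hΦD : (Φ D).PosSemidef := by
    rw [Unitary.conjStarAlgAut_star_apply]
    exact hD.conjTranspose_mul_mul_same _
  refine ⟨_, hΦD.one_le_det_one_add_mul (isHermitian_diagonal _) hE, ?_⟩
  convert tendsto_det_diagonal_one_sub_mul_add_div hF.eigenvalues (Φ D) using 2 with x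
  rw [hF.det_one_sub_smul, hF.det_sub_smul, map_add, map_one, add_sub_right_comm,
    one_sub_smul_diagonal]

end Matrix

theorem pencil_eigenvalue_product_le_det_general {n : ℕ}
    (D F : Matrix (Fin n) (Fin n) ℝ) (hD : D.PosSemidef) (hF : F.IsHermitian)
    (r : ℕ)
    (μ lam : Fin r → ℝ)
    (hμ : (Matrix.det ((1 : Matrix (Fin n) (Fin n) ℝ[X]) - (X : ℝ[X]) • F.map C)).roots
        = Multiset.map μ (Finset.univ : Finset (Fin r)).val)
    (hlam : (Matrix.det ((1 : Matrix (Fin n) (Fin n) ℝ[X]) + D.map C - (X : ℝ[X]) • F.map C)).roots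
        = Multiset.map lam (Finset.univ : Finset (Fin r)).val) :
    ∏ k, (lam k / μ k) ≤ Matrix.det (1 + D) := by
  change F.charpolyRev.roots = _ at hμ
  set q : ℝ[X] :=
    Matrix.det ((1 : Matrix (Fin n) (Fin n) ℝ[X]) + D.map C - (X : ℝ[X]) • F.map C)
  have hdet := hD.one_le_det_one_add
  obtain ⟨c, hc, hlim⟩ := hD.exists_one_le_tendsto_det_one_add_sub_smul_div hF
  replace hlim : Tendsto (fun x => q.eval x / F.charpolyRev.eval x) atTop (𝓝 c) := by
    simpa only [q, Matrix.eval_charpolyRev_eq_det, Matrix.eval_det_one_add_map_C_sub_X_smul]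
  obtain ⟨hdeg, hlc⟩ := natDegree_eq_and_leadingCoeff_div_eq_of_tendsto (by linarith) hlim
  have hp := hF.splits_charpolyRev
  have hq : q.Splits := by
    rw [splits_iff_card_roots, hlam, hdeg, hp.natDegree_eq_card_roots, hμ]
    simp
  have hq_coeff : q.coeff 0 = Matrix.det (1 + D) := by
    simp [coeff_zero_eq_eval_zero, q, Matrix.eval_det_one_add_map_C_sub_X_smul]
  have hp0 : F.charpolyRev ≠ 0 := fun h => by simpa [h] using F.eval_charpolyRev
  have hq0 : q ≠ 0 := fun h => by simp [h] at hq_coeff; linarith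
  rw [prod_div_eq_of_roots_eq hp hq hp0 hq0 hμ hlam, hq_coeff, coeff_zero_eq_eval_zero,
    Matrix.eval_charpolyRev, div_one, ← inv_div, hlc]
  exact mul_le_of_le_one_right (by linarith) (inv_le_one_of_one_le₀ hc)

/-- for a nonnegative operator `D` and a symmetric operator `F` on a
finite-dimensional space (realized as real symmetric matrices), if `μ_k` and `λ_k`
(`k = 1,…,r`, `r = rank F`) enumerate with multiplicity the eigenvalues of the pencils
`1 - λF` and `1 + D - λF` (i.e. the roots of the corresponding determinant polynomials),
then `∏ (λ_k/μ_k) ≤ det (1 + D)`. -/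
theorem pencil_eigenvalue_product_le_det {n : ℕ}
    (D F : Matrix (Fin n) (Fin n) ℝ) (hD : D.PosSemidef) (hF : F.IsHermitian)
    (r : ℕ) (hr : r = F.rank)
    (μ lam : Fin r → ℝ)
    (hμ : (Matrix.det ((1 : Matrix (Fin n) (Fin n) ℝ[X]) - (X : ℝ[X]) • F.map C)).roots
        = Multiset.map μ (Finset.univ : Finset (Fin r)).val)
    (hlam : (Matrix.det ((1 : Matrix (Fin n) (Fin n) ℝ[X]) + D.map C - (X : ℝ[X]) • F.map C)).roots
        = Multiset.map lam (Finset.univ : Finset (Fin r)).val) :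
    ∏ k, (lam k / μ k) ≤ Matrix.det (1 + D) :=
  pencil_eigenvalue_product_le_det_general D F hD hF r μ lam hμ hlam
end
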